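/- Tree Progress: in the tree-recognition system, if G is an input tree and G ⇒*_𝓡 H, then either |V_H| = 1 or H is not in normal form (i.e., some rule of 𝓡 is applicable to H via a match satisfying the dangling condition). -/

import Mathlib

/-! # Rooted graph transformation with relabelling -/

/-- A graph over a label alphabet `(LV, LE)`: finite vertex and edge sets, total
source/target functions, a partial node-labelling function `l`, a total
edge-labelling function `m`, and a partial rootedness function `p`
(`some true` = root node, `some false` = non-root, `none` = undefined). -/
structure RGraph (LV LE : Type) : Type 1 where
  V : Type
  E : Type
  finV : Finite V
  finE : Finite E
  s : E → V
  t : E → V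
  l : V → Option LV
  m : E → LE
  p : V → Option Bool

namespace RGraph

variable {LV LE : Type}

def IsTotallyLabelled (G : RGraph LV LE) : Prop := ∀ v, (G.l v).isSome
def IsTotallyRooted (G : RGraph LV LE) : Prop := ∀ v, (G.p v).isSome
/-- totally labelled, totally rooted graph -/
def IsTLRG (G : RGraph LV LE) : Prop := G.IsTotallyLabelled ∧ G.IsTotallyRooted

/-- The number of root nodes `|p⁻¹({1})|`. -/
noncomputable def rootCount (G : RGraph LV LE) : ℕ := Nat.card {v : G.V // G.p v = some true}

/-- The degree of a node. -/
noncomputable def degree (G : RGraph LV LE) (v : G.V) : ℕ :=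
  Nat.card {e : G.E // G.s e = v} + Nat.card {e : G.E // G.t e = v}

end RGraph

/-- RGraph morphisms preserve sources, targets, edge labels, and node labels and
rootedness wherever these are defined. -/
structure Morphism {LV LE : Type} (G H : RGraph LV LE) : Type where
  fV : G.V → H.V
  fE : G.E → H.E
  src : ∀ e, fV (G.s e) = H.s (fE e)
  tgt : ∀ e, fV (G.t e) = H.t (fE e)
  edgeLabel : ∀ e, G.m e = H.m (fE e)
  nodeLabel : ∀ v x, G.l v = some x → H.l (fV v) = some x
  rootedness : ∀ v b, G.p v = some b → H.p (fV v) = some b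

namespace Morphism

variable {LV LE : Type} {G H K : RGraph LV LE}

def Injective (g : Morphism G H) : Prop := Function.Injective g.fV ∧ Function.Injective g.fE

/-- identity morphism -/
def ident (G : RGraph LV LE) : Morphism G G where
  fV := id
  fE := id
  src := fun _ => rfl
  tgt := fun _ => rfl
  edgeLabel := fun _ => rfl
  nodeLabel := fun _ _ h => h
  rootedness := fun _ _ h => h

/-- composition of morphisms -/
def comp (g : Morphism G H) (h : Morphism H K) : Morphism G K where
  fV := h.fV ∘ g.fV
  fE := h.fE ∘ g.fE
  src := fun e => by simp [Function.comp, g.src e, h.src (g.fE e)]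
  tgt := fun e => by simp [Function.comp, g.tgt e, h.tgt (g.fE e)]
  edgeLabel := fun e => by simp [Function.comp, ← h.edgeLabel (g.fE e), g.edgeLabel e]
  nodeLabel := fun v x hx => h.nodeLabel _ _ (g.nodeLabel v x hx)
  rootedness := fun v b hb => h.rootedness _ _ (g.rootedness v b hb)

end Morphism

/-- An isomorphism of graphs: a morphism with a two-sided inverse morphism. -/
structure Iso {LV LE : Type} (G H : RGraph LV LE) : Type where
  toMor : Morphism G H
  invMor : Morphism H G
  leftV : ∀ v, invMor.fV (toMor.fV v) = v
  leftE : ∀ e, invMor.fE (toMor.fE e) = e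
  rightV : ∀ v, toMor.fV (invMor.fV v) = v
  rightE : ∀ e, toMor.fE (invMor.fE e) = e

/-- A rule `⟨L ← K → R⟩`: graphs `L`, `K`, `R` together with inclusion
(injective) morphisms `K ↪ L` and `K ↪ R`.  (In the rooted relabelling setting
`L` and `R` are additionally required to be TLRGs; this requirement is stated
as a hypothesis where needed.) -/
structure Rule (LV LE : Type) : Type 1 where
  L : RGraph LV LE
  K : RGraph LV LE
  R : RGraph LV LE
  incL : Morphism K L
  incR : Morphism K R
  injL : incL.Injective
  injR : incR.Injective

namespace Rule

variable {LV LE : Type} (r : Rule LV LE) (G : RGraph LV LE)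

/-- The inverse rule `r⁻¹ = ⟨R ← K → L⟩`. -/
def inv (r : Rule LV LE) : Rule LV LE where
  L := r.R
  K := r.K
  R := r.L
  incL := r.incR
  incR := r.incL
  injL := r.injR
  injR := r.injL

/-- The dangling condition: no edge of `G ∖ g(L)` is incident to a node of `g(L ∖ K)`. -/
def Dangling (g : Morphism r.L G) : Prop :=
  ∀ e : G.E, (∀ e' : r.L.E, g.fE e' ≠ e) →
    ∀ v : r.L.V, (∀ k : r.K.V, r.incL.fV k ≠ v) →
      G.s e ≠ g.fV v ∧ G.t e ≠ g.fV v

/-- The match `g` is applicable: it is injective and satisfies the dangling condition. -/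
def Applicable (g : Morphism r.L G) : Prop := g.Injective ∧ r.Dangling G g

/-- the nodes `g(L ∖ K)` deleted by applying `r` via `g` -/
def DelV (g : Morphism r.L G) : Set G.V :=
  {x | ∃ v : r.L.V, (∀ k : r.K.V, r.incL.fV k ≠ v) ∧ g.fV v = x}

/-- the edges `g(L ∖ K)` deleted by applying `r` via `g` -/
def DelE (g : Morphism r.L G) : Set G.E :=
  {x | ∃ e : r.L.E, (∀ k : r.K.E, r.incL.fE k ≠ e) ∧ g.fE e = x}

theorem kept_incL {g : Morphism r.L G} (hinj : g.Injective) (k : r.K.V) :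
    g.fV (r.incL.fV k) ∉ r.DelV G g := by
  rintro ⟨v, hv, heq⟩
  exact hv k (hinj.1 heq).symm

theorem kept_src {g : Morphism r.L G} (h : r.Applicable G g) {e : G.E}
    (he : e ∉ r.DelE G g) : G.s e ∉ r.DelV G g := by
  rintro ⟨v, hv, heq⟩
  by_cases hc : ∃ e', g.fE e' = e
  · obtain ⟨e', rfl⟩ := hc
    by_cases hk : ∃ k, r.incL.fE k = e'
    · obtain ⟨k, rfl⟩ := hk
      have h1 : g.fV (r.L.s (r.incL.fE k)) = G.s (g.fE (r.incL.fE k)) := g.src _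
      have h2 : r.incL.fV (r.K.s k) = r.L.s (r.incL.fE k) := r.incL.src k
      have h3 : g.fV v = g.fV (r.incL.fV (r.K.s k)) := by rw [heq, h2, h1]
      exact hv _ (h.1.1 h3).symm
    · exact he ⟨e', fun k hk' => hk ⟨k, hk'⟩, rfl⟩
  · exact (h.2 e (fun e' he' => hc ⟨e', he'⟩) v hv).1 heq.symm

theorem kept_tgt {g : Morphism r.L G} (h : r.Applicable G g) {e : G.E}
    (he : e ∉ r.DelE G g) : G.t e ∉ r.DelV G g := by
  rintro ⟨v, hv, heq⟩
  by_cases hc : ∃ e', g.fE e' = e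
  · obtain ⟨e', rfl⟩ := hc
    by_cases hk : ∃ k, r.incL.fE k = e'
    · obtain ⟨k, rfl⟩ := hk
      have h1 : g.fV (r.L.t (r.incL.fE k)) = G.t (g.fE (r.incL.fE k)) := g.tgt _
      have h2 : r.incL.fV (r.K.t k) = r.L.t (r.incL.fE k) := r.incL.tgt k
      have h3 : g.fV v = g.fV (r.incL.fV (r.K.t k)) := by rw [heq, h2, h1]
      exact hv _ (h.1.1 h3).symm
    · exact he ⟨e', fun k hk' => hk ⟨k, hk'⟩, rfl⟩
  · exact (h.2 e (fun e' he' => hc ⟨e', he'⟩) v hv).2 heq.symm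

attribute [local instance] Classical.propDecidable

/-- The result graph of applying `r` to `G` via an applicable match `g`:
delete `g(L ∖ K)` (undefining labels/rootedness of images of interface nodes
where they are undefined in `K`), then add `R ∖ K` disjointly, relabelling
(and re-rooting) the images of interface nodes according to `R`. -/
noncomputable def result (g : Morphism r.L G) (h : r.Applicable G g) : RGraph LV LE where
  V := {x : G.V // x ∉ r.DelV G g} ⊕ {v : r.R.V // ∀ k, r.incR.fV k ≠ v}
  E := {x : G.E // x ∉ r.DelE G g} ⊕ {e : r.R.E // ∀ k, r.incR.fE k ≠ e}
  finV := by
    haveI := G.finV; haveI := r.R.finV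
    infer_instance
  finE := by
    haveI := G.finE; haveI := r.R.finE
    infer_instance
  s := fun e =>
    match e with
    | Sum.inl x => Sum.inl ⟨G.s x.1, r.kept_src G h x.2⟩
    | Sum.inr x =>
        if hk : ∃ k, r.incR.fV k = r.R.s x.1 then
          Sum.inl ⟨g.fV (r.incL.fV hk.choose), r.kept_incL G h.1 _⟩
        else Sum.inr ⟨r.R.s x.1, fun k hk' => hk ⟨k, hk'⟩⟩
  t := fun e =>
    match e with
    | Sum.inl x => Sum.inl ⟨G.t x.1, r.kept_tgt G h x.2⟩
    | Sum.inr x =>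
        if hk : ∃ k, r.incR.fV k = r.R.t x.1 then
          Sum.inl ⟨g.fV (r.incL.fV hk.choose), r.kept_incL G h.1 _⟩
        else Sum.inr ⟨r.R.t x.1, fun k hk' => hk ⟨k, hk'⟩⟩
  l := fun v =>
    match v with
    | Sum.inl x =>
        if hk : ∃ k : r.K.V, r.K.l k = none ∧ g.fV (r.incL.fV k) = x.1 then
          r.R.l (r.incR.fV hk.choose)
        else G.l x.1
    | Sum.inr v => r.R.l v.1
  m := fun e =>
    match e with
    | Sum.inl x => G.m x.1
    | Sum.inr x => r.R.m x.1
  p := fun v =>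
    match v with
    | Sum.inl x =>
        if hk : ∃ k : r.K.V, r.K.p k = none ∧ g.fV (r.incL.fV k) = x.1 then
          r.R.p (r.incR.fV hk.choose)
        else G.p x.1
    | Sum.inr v => r.R.p v.1

/-- Direct derivation `G ⇒_r M`: there is an applicable match `g` such that `M`
is isomorphic to the result of applying `r` to `G` via `g`. -/
def Deriv (r : Rule LV LE) (G M : RGraph LV LE) : Prop :=
  ∃ (g : Morphism r.L G) (h : r.Applicable G g), Nonempty (Iso (r.result G g h) M)

end Rule

/-- `G ⇒_𝓡 H` for a set of rules. -/
def GTStep {LV LE : Type} (Rs : Set (Rule LV LE)) (G H : RGraph LV LE) : Prop :=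
  ∃ r ∈ Rs, r.Deriv G H

/-- `G ⇒*_𝓡 H`: the reflexive-transitive closure of `⇒_𝓡`, up to isomorphism. -/
def GTDerivStar {LV LE : Type} (Rs : Set (Rule LV LE)) (G H : RGraph LV LE) : Prop :=
  Relation.ReflTransGen (GTStep Rs) G H ∨ Nonempty (Iso G H)
/-! ## The tree-recognition system -/

/-- node labels: `□` (square) and `△` (triangle) -/
inductive NodeLab : Type where
  | square : NodeLab
  | tri : NodeLab
deriving DecidableEq

/-- `L` of rule `r0`: `v1 --□--> v2`, both `□`-labelled, `v1` unrooted, `v2` rooted. -/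
abbrev L0 : RGraph NodeLab Unit where
  V := Fin 2
  E := Unit
  finV := inferInstance
  finE := inferInstance
  s := fun _ => 0
  t := fun _ => 1
  l := fun _ => some .square
  m := fun _ => ()
  p := ![some false, some true]

/-- `K` of rules `r0` and `r1`: the single node `v1`, unlabelled, rootedness undefined. -/
abbrev K0 : RGraph NodeLab Unit where
  V := Unit
  E := PEmpty
  finV := inferInstance
  finE := inferInstance
  s := PEmpty.elim
  t := PEmpty.elim
  l := fun _ => none
  m := PEmpty.elim
  p := fun _ => none

/-- `R` of rules `r0` and `r1`: the single node `v1`, labelled `□`, rooted. -/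
abbrev R0 : RGraph NodeLab Unit where
  V := Unit
  E := PEmpty
  finV := inferInstance
  finE := inferInstance
  s := PEmpty.elim
  t := PEmpty.elim
  l := fun _ => some .square
  m := PEmpty.elim
  p := fun _ => some true

def incL0 : Morphism K0 L0 where
  fV := fun _ => 0
  fE := PEmpty.elim
  src := fun e => e.elim
  tgt := fun e => e.elim
  edgeLabel := fun e => e.elim
  nodeLabel := fun _ _ h => nomatch h
  rootedness := fun _ _ h => nomatch h

def incR0 : Morphism K0 R0 where
  fV := id
  fE := PEmpty.elim
  src := fun e => e.elim
  tgt := fun e => e.elim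
  edgeLabel := fun e => e.elim
  nodeLabel := fun _ _ h => nomatch h
  rootedness := fun _ _ h => nomatch h

/-- rule `r0`: prune a rooted `□`-leaf with unrooted `□`-parent, root moves to the parent -/
def r0 : Rule NodeLab Unit where
  L := L0
  K := K0
  R := R0
  incL := incL0
  incR := incR0
  injL := ⟨Function.injective_of_subsingleton _, Function.injective_of_subsingleton _⟩
  injR := ⟨Function.injective_of_subsingleton _, Function.injective_of_subsingleton _⟩

/-- `L` of rule `r1`: like `L0` but `v1` is labelled `△`. -/
abbrev L1 : RGraph NodeLab Unit where
  V := Fin 2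
  E := Unit
  finV := inferInstance
  finE := inferInstance
  s := fun _ => 0
  t := fun _ => 1
  l := ![some .tri, some .square]
  m := fun _ => ()
  p := ![some false, some true]

def incL1 : Morphism K0 L1 where
  fV := fun _ => 0
  fE := PEmpty.elim
  src := fun e => e.elim
  tgt := fun e => e.elim
  edgeLabel := fun e => e.elim
  nodeLabel := fun _ _ h => nomatch h
  rootedness := fun _ _ h => nomatch h

/-- rule `r1`: prune a rooted `□`-leaf with unrooted `△`-parent, root moves to the
parent which becomes `□`-labelled -/
def r1 : Rule NodeLab Unit where
  L := L1
  K := K0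
  R := R0
  incL := incL1
  incR := incR0
  injL := ⟨Function.injective_of_subsingleton _, Function.injective_of_subsingleton _⟩
  injR := ⟨Function.injective_of_subsingleton _, Function.injective_of_subsingleton _⟩

/-- `L` of rule `r2`: `v1 --□--> v2`, both `□`-labelled, `v1` rooted, `v2` unrooted. -/
abbrev L2 : RGraph NodeLab Unit where
  V := Fin 2
  E := Unit
  finV := inferInstance
  finE := inferInstance
  s := fun _ => 0
  t := fun _ => 1
  l := fun _ => some .square
  m := fun _ => ()
  p := ![some true, some false]

/-- `K` of rule `r2`: nodes `v1, v2`, unlabelled, rootedness undefined, no edges. -/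
abbrev K2 : RGraph NodeLab Unit where
  V := Fin 2
  E := PEmpty
  finV := inferInstance
  finE := inferInstance
  s := PEmpty.elim
  t := PEmpty.elim
  l := fun _ => none
  m := PEmpty.elim
  p := fun _ => none

/-- `R` of rule `r2`: `v1 --□--> v2`, `v1` labelled `△` and unrooted, `v2` labelled `□`
and rooted. -/
abbrev R2 : RGraph NodeLab Unit where
  V := Fin 2
  E := Unit
  finV := inferInstance
  finE := inferInstance
  s := fun _ => 0
  t := fun _ => 1
  l := ![some .tri, some .square]
  m := fun _ => ()
  p := ![some false, some true]

def incL2 : Morphism K2 L2 where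
  fV := id
  fE := PEmpty.elim
  src := fun e => e.elim
  tgt := fun e => e.elim
  edgeLabel := fun e => e.elim
  nodeLabel := fun _ _ h => nomatch h
  rootedness := fun _ _ h => nomatch h

def incR2 : Morphism K2 R2 where
  fV := id
  fE := PEmpty.elim
  src := fun e => e.elim
  tgt := fun e => e.elim
  edgeLabel := fun e => e.elim
  nodeLabel := fun _ _ h => nomatch h
  rootedness := fun _ _ h => nomatch h

/-- rule `r2`: push the root one step down an edge, marking the old position `△` -/
def r2 : Rule NodeLab Unit where
  L := L2
  K := K2
  R := R2
  incL := incL2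
  incR := incR2
  injL := ⟨Function.injective_id, Function.injective_of_subsingleton _⟩
  injR := ⟨Function.injective_id, Function.injective_of_subsingleton _⟩

/-- the rule set of the tree-recognition system -/
def TreeRules : Set (Rule NodeLab Unit) := {r0, r1, r2}

/-! ## Trees -/

/-- `IsUndirWalk G v l w`: `l` is an undirected walk from `v` to `w` in `G`;
each step is an edge together with a boolean telling in which direction it is
traversed. -/
def IsUndirWalk {LV LE : Type} (G : RGraph LV LE) : G.V → List (G.E × Bool) → G.V → Prop
  | v, [], w => v = w
  | v, (e, true) :: rest, w => G.s e = v ∧ IsUndirWalk G (G.t e) rest w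
  | v, (e, false) :: rest, w => G.t e = v ∧ IsUndirWalk G (G.s e) rest w

/-- connectedness via undirected walks -/
def IsConnectedGraph {LV LE : Type} (G : RGraph LV LE) : Prop :=
  ∀ v w : G.V, ∃ l, IsUndirWalk G v l w

/-- an undirected cycle: a non-empty closed undirected walk without repeated edges -/
def HasUndirCycle {LV LE : Type} (G : RGraph LV LE) : Prop :=
  ∃ (v : G.V) (l : List (G.E × Bool)), l ≠ [] ∧ IsUndirWalk G v l v ∧ (l.map Prod.fst).Nodup

/-- a tree: non-empty, connected, no undirected cycles, and every node has at
most one incoming edge -/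
def IsTree {LV LE : Type} (G : RGraph LV LE) : Prop :=
  Nonempty G.V ∧ IsConnectedGraph G ∧ ¬ HasUndirCycle G ∧
    ∀ v : G.V, Nat.card {e : G.E // G.t e = v} ≤ 1

/-- an input graph: a TLRG with exactly one root node, all nodes labelled `□`
(all edges are `□`-labelled since `Unit` is the edge alphabet) -/
def IsInputGraph (G : RGraph NodeLab Unit) : Prop :=
  G.IsTLRG ∧ (∀ v, G.l v = some .square) ∧ G.rootCount = 1

/-- no rule of `Rs` is applicable to `H` -/
def InNormalForm {LV LE : Type} (Rs : Set (Rule LV LE)) (H : RGraph LV LE) : Prop :=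
  ¬ ∃ r ∈ Rs, ∃ g : Morphism r.L H, r.Applicable H g

/-!
Along every derivation from an input tree the host graph keeps the shape of a tree with
in-degree at most one and a unique root labelled `□`, and the `△`-nodes are the trail of the
root: every `△`-node has an out-edge to a `△`-node or to the root. Rule `r2` only moves the
root one edge down, and `r0`, `r1` delete the root leaf after moving the root to its parent, so
this invariant is preserved (the result of a rule is compared with the host graph through maps
of the underlying graphs).

If the root has a child, that child is a `□`-node, since following the trail from a `△`-child
would produce a directed cycle, so `r2` applies. Otherwise the root is a leaf and, unless it
is the only node, its unique incoming edge is matched by `r0` or `r1`.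
-/

open Function

section Shape

variable {LV LE : Type}

structure ShapeHom (A B : RGraph LV LE) : Type where
  fV : A.V → B.V
  fE : A.E → B.E
  src : ∀ e, fV (A.s e) = B.s (fE e)
  tgt : ∀ e, fV (A.t e) = B.t (fE e)

def Morphism.toShapeHom {A B : RGraph LV LE} (f : Morphism A B) : ShapeHom A B :=
  ⟨f.fV, f.fE, f.src, f.tgt⟩

abbrev RGraph.relabel (G : RGraph LV LE) (l : G.V → Option LV) (p : G.V → Option Bool) :
    RGraph LV LE :=
  { G with l := l, p := p }

def RGraph.relabelHom (G : RGraph LV LE) (l : G.V → Option LV) (p : G.V → Option Bool) :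
    ShapeHom (G.relabel l p) G :=
  ⟨id, id, fun _ => rfl, fun _ => rfl⟩

def ShapeHom.toRelabel {A B : RGraph LV LE} (f : ShapeHom A B) (l : B.V → Option LV)
    (p : B.V → Option Bool) : ShapeHom A (B.relabel l p) :=
  ⟨f.fV, f.fE, f.src, f.tgt⟩

variable {A B G : RGraph LV LE}

theorem IsUndirWalk.map (f : ShapeHom A B) {u w : A.V} {l : List (A.E × Bool)}
    (h : IsUndirWalk A u l w) :
    IsUndirWalk B (f.fV u) (l.map fun q => (f.fE q.1, q.2)) (f.fV w) := by
  induction l generalizing u with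
  | nil => exact congrArg f.fV h
  | cons q l ih =>
    obtain ⟨e, _ | _⟩ := q
    · exact ⟨by rw [← f.tgt, h.1], by rw [← f.src]; exact ih h.2⟩
    · exact ⟨by rw [← f.src, h.1], by rw [← f.tgt]; exact ih h.2⟩

theorem IsUndirWalk.lift (f : ShapeHom A B) (hV : Injective f.fV) {l : List (B.E × Bool)}
    (hl : ∀ q ∈ l, q.1 ∈ Set.range f.fE) {u w : A.V} (h : IsUndirWalk B (f.fV u) l (f.fV w)) :
    ∃ l', IsUndirWalk A u l' w := by
  induction l generalizing u with
  | nil => exact ⟨[], hV h⟩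
  | cons q l ih =>
    obtain ⟨e, d⟩ := q
    obtain ⟨e, rfl⟩ := hl _ List.mem_cons_self
    have hl' := fun q hq => hl q (List.mem_cons_of_mem _ hq)
    cases d
    · obtain ⟨h₁, h₂⟩ := h
      rw [← f.src] at h₂
      obtain ⟨l', hl'⟩ := ih hl' h₂
      exact ⟨(e, false) :: l', hV ((f.tgt e).trans h₁), hl'⟩
    · obtain ⟨h₁, h₂⟩ := h
      rw [← f.tgt] at h₂
      obtain ⟨l', hl'⟩ := ih hl' h₂
      exact ⟨(e, true) :: l', hV ((f.src e).trans h₁), hl'⟩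

open scoped Classical in
/-- A walk that enters the leaf `b` has to leave it again through `e`, back to `G.s e`. -/
theorem IsUndirWalk.exists_avoiding_leaf {b : G.V} {e : G.E}
    (hleaf : ∀ e', e' ≠ e → G.s e' ≠ b ∧ G.t e' ≠ b) (hs : G.s e ≠ b) (ht : G.t e = b)
    {u w : G.V} {l : List (G.E × Bool)} (h : IsUndirWalk G u l w) (hw : w ≠ b) :
    ∃ l', IsUndirWalk G (if u = b then G.s e else u) l' w ∧ ∀ q ∈ l', q.1 ≠ e := by
  induction l generalizing u with
  | nil =>
    subst h
    exact ⟨[], by rw [if_neg hw]; rfl, by simp⟩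
  | cons q l ih =>
    obtain ⟨e', _ | _⟩ := q <;> obtain ⟨h₁, h₂⟩ := h
    all_goals obtain ⟨l', hl', hav⟩ := ih h₂; by_cases he : e' = e
    · subst he
      rw [if_neg hs] at hl'
      rw [if_pos (h₁.symm.trans ht)]
      exact ⟨l', hl', hav⟩
    · obtain ⟨hs', ht'⟩ := hleaf e' he
      rw [if_neg hs'] at hl'
      refine ⟨(e', false) :: l', ?_, by simpa [he] using hav⟩
      rw [if_neg (h₁ ▸ ht')]
      exact ⟨h₁, hl'⟩
    · subst he
      rw [if_pos ht] at hl'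
      rw [if_neg (h₁ ▸ hs), ← h₁]
      exact ⟨l', hl', hav⟩
    · obtain ⟨hs', ht'⟩ := hleaf e' he
      rw [if_neg ht'] at hl'
      refine ⟨(e', true) :: l', ?_, by simpa [he] using hav⟩
      rw [if_neg (h₁ ▸ hs')]
      exact ⟨h₁, hl'⟩

theorem IsUndirWalk.exists_incident {u v : G.V} {l : List (G.E × Bool)}
    (h : IsUndirWalk G u l v) (huv : u ≠ v) : ∃ e, G.s e = v ∨ G.t e = v := by
  induction l generalizing u with
  | nil => exact absurd h huv
  | cons q l ih =>
    obtain ⟨e, _ | _⟩ := q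
    · by_cases hv : G.s e = v
      exacts [⟨e, Or.inl hv⟩, ih h.2 hv]
    · by_cases hv : G.t e = v
      exacts [⟨e, Or.inr hv⟩, ih h.2 hv]

theorem isUndirWalk_range_map {x : ℕ → G.V} {ε : ℕ → G.E} (hs : ∀ k, G.s (ε k) = x k)
    (ht : ∀ k, G.t (ε k) = x (k + 1)) (n : ℕ) :
    IsUndirWalk G (x 0) ((List.range n).map fun k => (ε k, true)) (x n) := by
  induction n generalizing x ε with
  | zero => rfl
  | succ n ih =>
    rw [List.range_succ_eq_map, List.map_cons, List.map_map]
    refine ⟨hs 0, ?_⟩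
    rw [ht 0]
    exact ih (x := fun k => x (k + 1)) (ε := fun k => ε (k + 1)) (fun k => hs _) (fun k => ht _)

theorem IsConnectedGraph.comap_of_surjective (hB : IsConnectedGraph B) (f : ShapeHom A B)
    (hV : Injective f.fV) (hE : Surjective f.fE) : IsConnectedGraph A := fun u w =>
  have ⟨_, hl⟩ := hB (f.fV u) (f.fV w)
  hl.lift f hV fun q _ => hE q.1

theorem IsConnectedGraph.comap_of_leaf (hB : IsConnectedGraph B) (f : ShapeHom A B)
    (hV : Injective f.fV) {b : B.V} {e : B.E}
    (hleaf : ∀ e', e' ≠ e → B.s e' ≠ b ∧ B.t e' ≠ b) (hs : B.s e ≠ b) (ht : B.t e = b)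
    (hVb : ∀ x, f.fV x ≠ b) (hE : ∀ e', e' ≠ e → e' ∈ Set.range f.fE) :
    IsConnectedGraph A := by
  intro u w
  obtain ⟨l, hl⟩ := hB (f.fV u) (f.fV w)
  obtain ⟨l', hl', hav⟩ := hl.exists_avoiding_leaf hleaf hs ht (hVb w)
  rw [if_neg (hVb u)] at hl'
  exact hl'.lift f hV fun q hq => hE _ (hav q hq)

theorem IsConnectedGraph.relabel (h : IsConnectedGraph G) (l : G.V → Option LV)
    (p : G.V → Option Bool) : IsConnectedGraph (G.relabel l p) :=
  h.comap_of_surjective (G.relabelHom l p) injective_id surjective_id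

theorem HasUndirCycle.map (f : ShapeHom A B) (hE : Injective f.fE) (h : HasUndirCycle A) :
    HasUndirCycle B := by
  obtain ⟨v, l, hne, hw, hnd⟩ := h
  refine ⟨f.fV v, _, by simpa using hne, hw.map f, ?_⟩
  rw [List.map_map, show Prod.fst ∘ (fun q : A.E × Bool => (f.fE q.1, q.2)) = f.fE ∘ Prod.fst
    from rfl, ← List.map_map]
  exact hnd.map hE

theorem ShapeHom.card_inEdges_le (f : ShapeHom A B) (hE : Injective f.fE) (v : A.V) :
    Nat.card {e : A.E // A.t e = v} ≤ Nat.card {e : B.E // B.t e = f.fV v} :=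
  have := B.finE
  Nat.card_le_card_of_injective (fun e => ⟨f.fE e.1, by rw [← f.tgt, e.2]⟩)
    fun _ _ h => Subtype.ext (hE (congrArg Subtype.val h))

theorem not_hasUndirCycle_relabel (h : ¬ HasUndirCycle G) (l : G.V → Option LV)
    (p : G.V → Option Bool) : ¬ HasUndirCycle (G.relabel l p) :=
  fun hc => h (hc.map (G.relabelHom l p) injective_id)

theorem ne_of_not_hasUndirCycle (h : ¬ HasUndirCycle G) (e : G.E) : G.s e ≠ G.t e :=
  fun he => h ⟨G.s e, [(e, true)], by simp, ⟨rfl, he.symm⟩, by simp⟩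

/-- Following out-edges inside `Q` eventually revisits a node; a node of minimal period on
this orbit closes a directed cycle whose edges are distinct because their sources are. -/
theorem hasUndirCycle_of_forall_exists_out (Q : Set G.V) (hQ : Q.Nonempty)
    (hout : ∀ x ∈ Q, ∃ e, G.s e = x ∧ G.t e ∈ Q) : HasUndirCycle G := by
  have := G.finV
  obtain ⟨x₀, hx₀⟩ := hQ
  have : Nonempty G.E := ⟨(hout x₀ hx₀).choose⟩
  choose! next hnext using hout
  set f : G.V → G.V := fun x => G.t (next x)
  have hf : Set.MapsTo f Q Q := fun x hx => (hnext x hx).2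
  obtain ⟨m, n, hmn, hfmn⟩ : ∃ m n, m < n ∧ f^[m] x₀ = f^[n] x₀ := by
    obtain ⟨m, n, hne, h⟩ := Finite.exists_ne_map_eq_of_infinite fun k => f^[k] x₀
    rcases hne.lt_or_gt with hlt | hlt
    exacts [⟨m, n, hlt, h⟩, ⟨n, m, hlt, h.symm⟩]
  set y := f^[m] x₀
  have hyQ : ∀ k, f^[k] y ∈ Q := fun k => hf.iterate k (hf.iterate m hx₀)
  have hy : IsPeriodicPt f (n - m) y := by
    rw [IsPeriodicPt, IsFixedPt, ← iterate_add_apply, Nat.sub_add_cancel hmn.le, hfmn]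
  have hp := minimalPeriod_pos_of_mem_periodicPts (mk_mem_periodicPts (by omega) hy)
  refine ⟨y, (List.range (minimalPeriod f y)).map fun k => (next (f^[k] y), true),
    by simp; omega, ?_, ?_⟩
  · have := isUndirWalk_range_map (x := fun k => f^[k] y) (ε := fun k => next (f^[k] y))
      (fun k => (hnext _ (hyQ k)).1) (fun k => (iterate_succ_apply' f k y).symm)
      (minimalPeriod f y)
    rwa [iterate_minimalPeriod] at this
  · rw [List.map_map]
    refine List.Nodup.map_on (fun i hi j hj hij => iterate_injOn_Iio_minimalPeriod
      (List.mem_range.mp hi) (List.mem_range.mp hj) ?_) List.nodup_range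
    show f^[i] y = f^[j] y
    rw [← (hnext _ (hyQ i)).1, ← (hnext _ (hyQ j)).1]
    exact congrArg G.s hij

end Shape

namespace Rule

variable {LV LE : Type} {r : Rule LV LE} {G : RGraph LV LE} {g : Morphism r.L G}
  (h : r.Applicable G g)

theorem result_s_inr {y : {e : r.R.E // ∀ k, r.incR.fE k ≠ e}} {k : r.K.V}
    (hk : r.incR.fV k = r.R.s y.1) :
    (r.result G g h).s (Sum.inr y) = Sum.inl ⟨g.fV (r.incL.fV k), r.kept_incL G h.1 k⟩ := by
  have hex : ∃ k, r.incR.fV k = r.R.s y.1 := ⟨k, hk⟩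
  have hchoose : hex.choose = k := r.injR.1 (hex.choose_spec.trans hk.symm)
  simp only [result, dif_pos hex, hchoose]

theorem result_t_inr {y : {e : r.R.E // ∀ k, r.incR.fE k ≠ e}} {k : r.K.V}
    (hk : r.incR.fV k = r.R.t y.1) :
    (r.result G g h).t (Sum.inr y) = Sum.inl ⟨g.fV (r.incL.fV k), r.kept_incL G h.1 k⟩ := by
  have hex : ∃ k, r.incR.fV k = r.R.t y.1 := ⟨k, hk⟩
  have hchoose : hex.choose = k := r.injR.1 (hex.choose_spec.trans hk.symm)
  simp only [result, dif_pos hex, hchoose]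

theorem result_l_inl_of_eq {x : {x : G.V // x ∉ r.DelV G g}} {k : r.K.V} (hk : r.K.l k = none)
    (hx : g.fV (r.incL.fV k) = x.1) : (r.result G g h).l (Sum.inl x) = r.R.l (r.incR.fV k) := by
  have hex : ∃ k, r.K.l k = none ∧ g.fV (r.incL.fV k) = x.1 := ⟨k, hk, hx⟩
  have hchoose : hex.choose = k := r.injL.1 (h.1.1 (hex.choose_spec.2.trans hx.symm))
  simp only [result, dif_pos hex, hchoose]

theorem result_l_inl_of_ne {x : {x : G.V // x ∉ r.DelV G g}}
    (hx : ∀ k, g.fV (r.incL.fV k) ≠ x.1) : (r.result G g h).l (Sum.inl x) = G.l x.1 := by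
  have hex : ¬ ∃ k, r.K.l k = none ∧ g.fV (r.incL.fV k) = x.1 := fun ⟨k, _, hk⟩ => hx k hk
  simp only [result, dif_neg hex]

theorem result_p_inl_of_eq {x : {x : G.V // x ∉ r.DelV G g}} {k : r.K.V} (hk : r.K.p k = none)
    (hx : g.fV (r.incL.fV k) = x.1) : (r.result G g h).p (Sum.inl x) = r.R.p (r.incR.fV k) := by
  have hex : ∃ k, r.K.p k = none ∧ g.fV (r.incL.fV k) = x.1 := ⟨k, hk, hx⟩
  have hchoose : hex.choose = k := r.injL.1 (h.1.1 (hex.choose_spec.2.trans hx.symm))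
  simp only [result, dif_pos hex, hchoose]

theorem result_p_inl_of_ne {x : {x : G.V // x ∉ r.DelV G g}}
    (hx : ∀ k, g.fV (r.incL.fV k) ≠ x.1) : (r.result G g h).p (Sum.inl x) = G.p x.1 := by
  have hex : ¬ ∃ k, r.K.p k = none ∧ g.fV (r.incL.fV k) = x.1 := fun ⟨k, _, hk⟩ => hx k hk
  simp only [result, dif_neg hex]

def resultToHost (hV : Surjective r.incR.fV) (hE : Surjective r.incR.fE) :
    ShapeHom (r.result G g h) G where
  fV := Sum.elim Subtype.val fun v => (v.2 _ (hV v.1).choose_spec).elim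
  fE := Sum.elim Subtype.val fun e => (e.2 _ (hE e.1).choose_spec).elim
  src := by
    rintro (e | e)
    exacts [rfl, (e.2 _ (hE e.1).choose_spec).elim]
  tgt := by
    rintro (e | e)
    exacts [rfl, (e.2 _ (hE e.1).choose_spec).elim]

theorem resultToHost_injective_fV (hV : Surjective r.incR.fV)
    (hE : Surjective r.incR.fE) : Injective (r.resultToHost h hV hE).fV := by
  rintro (x | x) (y | y) hxy
  exacts [congrArg _ (Subtype.ext hxy), (y.2 _ (hV y.1).choose_spec).elim,
    (x.2 _ (hV x.1).choose_spec).elim, (x.2 _ (hV x.1).choose_spec).elim]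

theorem resultToHost_injective_fE (hV : Surjective r.incR.fV)
    (hE : Surjective r.incR.fE) : Injective (r.resultToHost h hV hE).fE := by
  rintro (x | x) (y | y) hxy
  exacts [congrArg _ (Subtype.ext hxy), (y.2 _ (hE y.1).choose_spec).elim,
    (x.2 _ (hE x.1).choose_spec).elim, (x.2 _ (hE x.1).choose_spec).elim]

theorem resultToHost_fV_notMem (hV : Surjective r.incR.fV)
    (hE : Surjective r.incR.fE) (y : (r.result G g h).V) :
    (r.resultToHost h hV hE).fV y ∉ r.DelV G g := by
  rcases y with y | y
  exacts [y.2, (y.2 _ (hV y.1).choose_spec).elim]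

theorem notMem_DelV_of_surjective (hL : Surjective r.incL.fV) (x : G.V) :
    x ∉ r.DelV G g := fun ⟨v, hv, _⟩ => (hL v).elim hv

end Rule

def IsMarked (H : RGraph NodeLab Unit) (v : H.V) : Prop :=
  H.l v = some .tri ∨ H.p v = some true

structure TreeInvariant (H : RGraph NodeLab Unit) : Prop where
  labelled : H.IsTotallyLabelled
  rooted : H.IsTotallyRooted
  exists_root : ∃ v, H.p v = some true
  root_unique : ∀ {x y}, H.p x = some true → H.p y = some true → x = y
  root_square : ∀ {v}, H.p v = some true → H.l v = some .square
  tri_out : ∀ {v}, H.l v = some .tri → ∃ e, H.s e = v ∧ IsMarked H (H.t e)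
  connected : IsConnectedGraph H
  acyclic : ¬ HasUndirCycle H
  card_inEdges_le_one : ∀ v, Nat.card {e : H.E // H.t e = v} ≤ 1

open scoped Classical in
/-- The relabelling done by `r2`: the root moves from `a` to `b` and leaves `△` behind. -/
noncomputable abbrev RGraph.pushRoot (H : RGraph NodeLab Unit) (a b : H.V) :
    RGraph NodeLab Unit :=
  H.relabel (update (update H.l a (some .tri)) b (some .square))
    (update (update H.p a (some false)) b (some true))

open scoped Classical in
/-- The relabelling done by `r0` and `r1`: the root moves from `b` to `a`, which becomes `□`. -/
noncomputable abbrev RGraph.pullRoot (H : RGraph NodeLab Unit) (a b : H.V) :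
    RGraph NodeLab Unit :=
  H.relabel (update H.l a (some .square)) (update (update H.p b (some false)) a (some true))

namespace TreeInvariant

open scoped Classical

variable {A B H : RGraph NodeLab Unit}

theorem of_input (hG : IsInputGraph H) (hT : IsTree H) : TreeInvariant H := by
  obtain ⟨⟨hl, hp⟩, hsq, hroot⟩ := hG
  obtain ⟨-, hconn, hcyc, hdeg⟩ := hT
  obtain ⟨⟨x, hx⟩, hxu⟩ := Nat.card_eq_one_iff_exists.mp hroot
  exact
    { labelled := hl
      rooted := hp
      exists_root := ⟨x, hx⟩
      root_unique := fun hy hz =>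
        (congrArg Subtype.val (hxu ⟨_, hy⟩)).trans (congrArg Subtype.val (hxu ⟨_, hz⟩)).symm
      root_square := fun _ => hsq _
      tri_out := fun hv => by simp [hsq] at hv
      connected := hconn
      acyclic := hcyc
      card_inEdges_le_one := hdeg }

theorem comap (hH : TreeInvariant H) (f : ShapeHom B H) (hV : Injective f.fV)
    (hE : Injective f.fE) (hl : ∀ y, B.l y = H.l (f.fV y)) (hp : ∀ y, B.p y = H.p (f.fV y))
    (hroot : ∀ x, H.p x = some true → x ∈ Set.range f.fV)
    (hmarked : ∀ e, IsMarked H (H.t e) → e ∈ Set.range f.fE) (hconn : IsConnectedGraph B) :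
    TreeInvariant B where
  labelled y := by rw [hl]; exact hH.labelled _
  rooted y := by rw [hp]; exact hH.rooted _
  exists_root :=
    have ⟨x, hx⟩ := hH.exists_root
    have ⟨y, hy⟩ := hroot x hx
    ⟨y, by rw [hp, hy, hx]⟩
  root_unique hx hy := hV (hH.root_unique (by rwa [← hp]) (by rwa [← hp]))
  root_square hv := by rw [hl]; exact hH.root_square (by rwa [← hp])
  tri_out {y} hy := by
    obtain ⟨e, hs, he⟩ := hH.tri_out (by rwa [← hl])
    obtain ⟨e', rfl⟩ := hmarked e he
    refine ⟨e', hV (by rw [f.src, hs]), ?_⟩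
    rw [IsMarked, hl, hp, f.tgt]
    exact he
  connected := hconn
  acyclic h := hH.acyclic (h.map f hE)
  card_inEdges_le_one v := (f.card_inEdges_le hE v).trans (hH.card_inEdges_le_one _)

theorem of_iso (hA : TreeInvariant A) (i : Iso A B) : TreeInvariant B := by
  have hV : Injective i.invMor.fV := LeftInverse.injective i.rightV
  have hE : Surjective i.invMor.fE := fun e => ⟨_, i.leftE e⟩
  refine hA.comap i.invMor.toShapeHom hV (LeftInverse.injective i.rightE) (fun y => ?_)
    (fun y => ?_) (fun x _ => ⟨_, i.leftV x⟩) (fun e _ => hE e)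
    (hA.connected.comap_of_surjective i.invMor.toShapeHom hV hE)
  · obtain ⟨c, hc⟩ := Option.isSome_iff_exists.mp (hA.labelled (i.invMor.fV y))
    have := i.toMor.nodeLabel _ _ hc
    rw [i.rightV] at this
    exact this.trans hc.symm
  · obtain ⟨c, hc⟩ := Option.isSome_iff_exists.mp (hA.rooted (i.invMor.fV y))
    have := i.toMor.rootedness _ _ hc
    rw [i.rightV] at this
    exact this.trans hc.symm

theorem p_eq_false_of_ne_root (hH : TreeInvariant H) {v x : H.V} (hv : H.p v = some true)
    (hx : x ≠ v) : H.p x = some false := by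
  obtain ⟨_ | _, hb⟩ := Option.isSome_iff_exists.mp (hH.rooted x)
  exacts [hb, absurd (hH.root_unique hb hv) hx]

theorem l_eq_square_of_ne_tri (hH : TreeInvariant H) {x : H.V} (hx : H.l x ≠ some .tri) :
    H.l x = some .square := by
  obtain ⟨_ | _, hc⟩ := Option.isSome_iff_exists.mp (hH.labelled x)
  exacts [hc, absurd hc hx]

theorem eq_of_t_eq (hH : TreeInvariant H) {e e' : H.E} (h : H.t e = H.t e') : e = e' := by
  have := H.finE
  have : Subsingleton {e'' // H.t e'' = H.t e'} :=
    Finite.card_le_one_iff_subsingleton.mp (hH.card_inEdges_le_one _)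
  exact congrArg Subtype.val
    (Subsingleton.elim (α := {e'' // H.t e'' = H.t e'}) ⟨e, h⟩ ⟨e', rfl⟩)

/-- Otherwise the marked nodes would all have an out-edge to a marked node. -/
theorem l_t_ne_tri_of_root (hH : TreeInvariant H) {e : H.E} (hroot : H.p (H.s e) = some true) :
    H.l (H.t e) ≠ some .tri := fun htri =>
  hH.acyclic <| hasUndirCycle_of_forall_exists_out {x | IsMarked H x} ⟨_, Or.inr hroot⟩
    fun _ hx => hx.elim hH.tri_out fun hx => ⟨e, hH.root_unique hroot hx, Or.inl htri⟩

theorem pushRoot (hH : TreeInvariant H) {e : H.E} (hroot : H.p (H.s e) = some true) :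
    TreeInvariant (H.pushRoot (H.s e) (H.t e)) := by
  have hab : H.s e ≠ H.t e := ne_of_not_hasUndirCycle hH.acyclic e
  have hroot' : ∀ {x}, (H.pushRoot (H.s e) (H.t e)).p x = some true → x = H.t e := by
    intro x hx
    by_contra hxb
    simp only [update_of_ne hxb] at hx
    by_cases hxa : x = H.s e
    · simp [hxa] at hx
    · rw [update_of_ne hxa] at hx
      exact hxa (hH.root_unique hx hroot)
  have hmarked : ∀ {y}, IsMarked H y → IsMarked (H.pushRoot (H.s e) (H.t e)) y := by
    intro y hy
    by_cases hyb : y = H.t e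
    · simp [IsMarked, hyb]
    by_cases hya : y = H.s e
    · simp [IsMarked, hya, hab]
    simpa [IsMarked, hya, hyb] using hy
  refine
    { labelled := fun x => ?_
      rooted := fun x => ?_
      exists_root := ⟨H.t e, by simp⟩
      root_unique := fun hx hy => (hroot' hx).trans (hroot' hy).symm
      root_square := fun hx => by simp [hroot' hx]
      tri_out := fun {x} hx => ?_
      connected := hH.connected.relabel _ _
      acyclic := not_hasUndirCycle_relabel hH.acyclic _ _
      card_inEdges_le_one := hH.card_inEdges_le_one }
  · simp only [update_apply]
    split_ifs
    exacts [rfl, rfl, hH.labelled x]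
  · simp only [update_apply]
    split_ifs
    exacts [rfl, rfl, hH.rooted x]
  · have hxb : x ≠ H.t e := by rintro rfl; simp at hx
    by_cases hxa : x = H.s e
    · exact ⟨e, hxa.symm, Or.inr (by simp)⟩
    · simp only [update_of_ne hxb, update_of_ne hxa] at hx
      obtain ⟨e', hs, hm⟩ := hH.tri_out hx
      exact ⟨e', hs, hmarked hm⟩

theorem pullRoot (hH : TreeInvariant H) {e : H.E} (hroot : H.p (H.t e) = some true) :
    TreeInvariant (H.pullRoot (H.s e) (H.t e)) := by
  have hab : H.s e ≠ H.t e := ne_of_not_hasUndirCycle hH.acyclic e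
  have hroot' : ∀ {x}, (H.pullRoot (H.s e) (H.t e)).p x = some true → x = H.s e := by
    intro x hx
    by_contra hxa
    simp only [update_of_ne hxa] at hx
    by_cases hxb : x = H.t e
    · simp [hxb] at hx
    · rw [update_of_ne hxb] at hx
      exact hxb (hH.root_unique hx hroot)
  refine
    { labelled := fun x => ?_
      rooted := fun x => ?_
      exists_root := ⟨H.s e, by simp⟩
      root_unique := fun hx hy => (hroot' hx).trans (hroot' hy).symm
      root_square := fun hx => by simp [hroot' hx]
      tri_out := fun {x} hx => ?_
      connected := hH.connected.relabel _ _
      acyclic := not_hasUndirCycle_relabel hH.acyclic _ _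
      card_inEdges_le_one := hH.card_inEdges_le_one }
  · simp only [update_apply]
    split_ifs
    exacts [rfl, hH.labelled x]
  · simp only [update_apply]
    split_ifs
    exacts [rfl, rfl, hH.rooted x]
  · have hxa : x ≠ H.s e := by rintro rfl; simp at hx
    simp only [update_of_ne hxa] at hx
    obtain ⟨e', hs, hm | hm⟩ := hH.tri_out hx
    · refine ⟨e', hs, ?_⟩
      by_cases hta : H.t e' = H.s e
      · exact Or.inr (by simp [hta])
      · exact Or.inl (by simpa [hta] using hm)
    · obtain rfl : e' = e := hH.eq_of_t_eq (hH.root_unique hm hroot)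
      exact absurd hs.symm hxa

theorem result_of_prune {r : Rule NodeLab Unit} {g : Morphism r.L H} (h : r.Applicable H g)
    (hH : TreeInvariant H) {e : H.E} (hV : Surjective r.incR.fV) (hE : Surjective r.incR.fE)
    (hDelV : ∀ x, x ∈ r.DelV H g ↔ x = H.t e) (hDelE : ∀ x, x ∈ r.DelE H g ↔ x = e)
    (hroot : H.p (H.t e) = some true) (hlt : H.l (H.t e) = some .square)
    (hl : ∀ x, (r.result H g h).l (.inl x) = (H.pullRoot (H.s e) (H.t e)).l x.1)
    (hp : ∀ x, (r.result H g h).p (.inl x) = (H.pullRoot (H.s e) (H.t e)).p x.1) :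
    TreeInvariant (r.result H g h) := by
  have hab := ne_of_not_hasUndirCycle hH.acyclic e
  set f := r.resultToHost h hV hE
  have hfV : Injective f.fV := r.resultToHost_injective_fV h hV hE
  have hfb : ∀ y, f.fV y ≠ H.t e := fun y =>
    (hDelV _).not.mp (r.resultToHost_fV_notMem h hV hE y)
  have hrangeE : ∀ e', e' ≠ e → e' ∈ Set.range f.fE := fun e' he' =>
    ⟨.inl ⟨e', (hDelE e').not.mpr he'⟩, rfl⟩
  have hleaf : ∀ e', e' ≠ e → H.s e' ≠ H.t e ∧ H.t e' ≠ H.t e := fun e' he' =>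
    have hk := (hDelE e').not.mpr he'
    ⟨(hDelV _).not.mp (r.kept_src H h hk), (hDelV _).not.mp (r.kept_tgt H h hk)⟩
  refine (hH.pullRoot hroot).comap (f.toRelabel _ _) hfV (r.resultToHost_injective_fE h hV hE)
    ?_ ?_ (fun x hx => ⟨.inl ⟨x, (hDelV x).not.mpr ?_⟩, rfl⟩) (fun e' he' => hrangeE e' ?_)
    (hH.connected.comap_of_leaf f hfV hleaf hab rfl hfb hrangeE)
  · rintro (x | x)
    exacts [hl x, (x.2 _ (hV x.1).choose_spec).elim]
  · rintro (x | x)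
    exacts [hp x, (x.2 _ (hV x.1).choose_spec).elim]
  · intro hxb
    simp [hxb, hab.symm] at hx
  · intro he
    simp [IsMarked, he, hab.symm, hlt] at he'

theorem result_r0_r1 {r : Rule NodeLab Unit} (hr : r = r0 ∨ r = r1) {g : Morphism r.L H}
    (h : r.Applicable H g) (hH : TreeInvariant H) : TreeInvariant (r.result H g h) := by
  rcases hr with rfl | rfl
  all_goals
    have hse : H.s (g.fE ()) = g.fV (0 : Fin 2) := (g.src ()).symm
    have hte : H.t (g.fE ()) = g.fV (1 : Fin 2) := (g.tgt ()).symm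
    have hDelV : ∀ x, x ∈ Rule.DelV _ H g ↔ x = g.fV (1 : Fin 2) := by
      refine fun x => ⟨?_, ?_⟩
      · rintro ⟨v, hv, rfl⟩
        rw [Fin.eq_one_of_ne_zero v fun h => hv () h.symm]
      · rintro rfl
        exact ⟨(1 : Fin 2), fun _ h => Fin.zero_ne_one h, rfl⟩
    refine hH.result_of_prune h (e := g.fE ()) (fun u => ⟨u, rfl⟩) (fun e => e.elim)
      (hte ▸ hDelV) ?_ (hte ▸ g.rootedness (1 : Fin 2) _ rfl)
      (hte ▸ g.nodeLabel (1 : Fin 2) _ rfl) ?_ ?_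
    · refine fun x => ⟨?_, ?_⟩
      · rintro ⟨⟨⟩, -, rfl⟩
        rfl
      · rintro rfl
        exact ⟨(), fun k => k.elim, rfl⟩
    · intro x
      rw [hse, hte]
      by_cases hx : g.fV (0 : Fin 2) = x.1
      · rw [Rule.result_l_inl_of_eq h (k := ()) rfl hx, ← hx]
        simp [r0, r1]
      · rw [Rule.result_l_inl_of_ne h fun _ => hx]
        simp [Ne.symm hx]
    · intro x
      have hxb : x.1 ≠ g.fV (1 : Fin 2) := fun hxb => x.2 ((hDelV _).mpr hxb)
      rw [hse, hte]
      by_cases hx : g.fV (0 : Fin 2) = x.1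
      · rw [Rule.result_p_inl_of_eq h (k := ()) rfl hx, ← hx]
        simp [r0, r1]
      · rw [Rule.result_p_inl_of_ne h fun _ => hx]
        simp [Ne.symm hx, hxb]

/-- `r2` deletes the matched edge and adds it back; mapping the new edge to the old one
identifies the result with the host graph. -/
def r2ResultHom {g : Morphism r2.L H} (h : r2.Applicable H g) :
    ShapeHom (r2.result H g h) H where
  fV := Sum.elim Subtype.val fun v => (v.2 v.1 rfl).elim
  fE := Sum.elim Subtype.val fun _ => g.fE ()
  src := by
    rintro (e | e)
    · rfl
    · rw [Rule.result_s_inr h (k := (0 : Fin 2)) rfl]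
      exact g.src ()
  tgt := by
    rintro (e | e)
    · rfl
    · rw [Rule.result_t_inr h (k := (1 : Fin 2)) rfl]
      exact g.tgt ()

theorem result_r2 {g : Morphism r2.L H} (h : r2.Applicable H g) (hH : TreeInvariant H) :
    TreeInvariant (r2.result H g h) := by
  have hse : H.s (g.fE ()) = g.fV (0 : Fin 2) := (g.src ()).symm
  have hte : H.t (g.fE ()) = g.fV (1 : Fin 2) := (g.tgt ()).symm
  have hab : g.fV (0 : Fin 2) ≠ g.fV (1 : Fin 2) := fun h' => Fin.zero_ne_one (h.1.1 h')
  have hmatched : g.fE () ∈ r2.DelE H g := ⟨(), fun k => k.elim, rfl⟩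
  set f := r2ResultHom h
  have hfV : Injective f.fV := by
    rintro (x | x) (y | y) hxy
    exacts [congrArg _ (Subtype.ext hxy), (y.2 y.1 rfl).elim, (x.2 x.1 rfl).elim,
      (x.2 x.1 rfl).elim]
  have hfVs : Surjective f.fV := fun x =>
    ⟨.inl ⟨x, Rule.notMem_DelV_of_surjective (fun v => ⟨v, rfl⟩) x⟩, rfl⟩
  have hfE : Injective f.fE := by
    rintro (x | x) (y | y) hxy
    · exact congrArg _ (Subtype.ext hxy)
    · exact x.2 ((show x.1 = g.fE () from hxy) ▸ hmatched) |>.elim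
    · exact y.2 ((show g.fE () = y.1 from hxy) ▸ hmatched) |>.elim
    · exact congrArg _ (Subtype.ext rfl)
  have hfEs : Surjective f.fE := fun e => by
    by_cases he : e = g.fE ()
    · exact ⟨.inr ⟨(), fun k => k.elim⟩, he.symm⟩
    · exact ⟨.inl ⟨e, fun ⟨(), _, he'⟩ => he he'.symm⟩, rfl⟩
  refine (hH.pushRoot (hse ▸ g.rootedness (0 : Fin 2) _ rfl)).comap (f.toRelabel _ _) hfV hfE
    ?_ ?_ (fun x _ => hfVs x) (fun e _ => hfEs e) (hH.connected.comap_of_surjective f hfV hfEs)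
  · rintro (x | x)
    · show (r2.result H g h).l (.inl x) = (H.pushRoot _ _).l x.1
      rw [hse, hte]
      by_cases ha : g.fV (0 : Fin 2) = x.1
      · rw [Rule.result_l_inl_of_eq h (k := (0 : Fin 2)) rfl ha, ← ha]
        simp [r2, incR2, hab]
      by_cases hb : g.fV (1 : Fin 2) = x.1
      · rw [Rule.result_l_inl_of_eq h (k := (1 : Fin 2)) rfl hb, ← hb]
        simp [r2, incR2]
      rw [Rule.result_l_inl_of_ne h (Fin.forall_fin_two.mpr ⟨ha, hb⟩)]
      simp [Ne.symm ha, Ne.symm hb]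
    · exact (x.2 x.1 rfl).elim
  · rintro (x | x)
    · show (r2.result H g h).p (.inl x) = (H.pushRoot _ _).p x.1
      rw [hse, hte]
      by_cases ha : g.fV (0 : Fin 2) = x.1
      · rw [Rule.result_p_inl_of_eq h (k := (0 : Fin 2)) rfl ha, ← ha]
        simp [r2, incR2, hab]
      by_cases hb : g.fV (1 : Fin 2) = x.1
      · rw [Rule.result_p_inl_of_eq h (k := (1 : Fin 2)) rfl hb, ← hb]
        simp [r2, incR2]
      rw [Rule.result_p_inl_of_ne h (Fin.forall_fin_two.mpr ⟨ha, hb⟩)]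
      simp [Ne.symm ha, Ne.symm hb]
    · exact (x.2 x.1 rfl).elim

theorem step {A B : RGraph NodeLab Unit} (hA : TreeInvariant A) (hAB : GTStep TreeRules A B) :
    TreeInvariant B := by
  obtain ⟨r, hr, g, h, ⟨i⟩⟩ := hAB
  simp only [TreeRules, Set.mem_insert_iff, Set.mem_singleton_iff] at hr
  rcases hr with rfl | rfl | rfl
  · exact (hA.result_r0_r1 (.inl rfl) h).of_iso i
  · exact (hA.result_r0_r1 (.inr rfl) h).of_iso i
  · exact (hA.result_r2 h).of_iso i

end TreeInvariant

/-- The left-hand sides of all three rules are a single edge `0 → 1` with labels `l`, `p`. -/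
abbrev edgePattern (l : Fin 2 → Option NodeLab) (p : Fin 2 → Option Bool) :
    RGraph NodeLab Unit where
  V := Fin 2
  E := Unit
  finV := inferInstance
  finE := inferInstance
  s := fun _ => 0
  t := fun _ => 1
  l := l
  m := fun _ => ()
  p := p

def edgeMatch {l : Fin 2 → Option NodeLab} {p : Fin 2 → Option Bool} {H : RGraph NodeLab Unit}
    (e : H.E) (hl : ∀ i c, l i = some c → H.l (![H.s e, H.t e] i) = some c)
    (hp : ∀ i b, p i = some b → H.p (![H.s e, H.t e] i) = some b) :
    Morphism (edgePattern l p) H where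
  fV := ![H.s e, H.t e]
  fE := fun _ => e
  src := fun _ => rfl
  tgt := fun _ => rfl
  edgeLabel := fun _ => rfl
  nodeLabel := hl
  rootedness := hp

theorem edgeMatch_injective {l : Fin 2 → Option NodeLab} {p : Fin 2 → Option Bool}
    {H : RGraph NodeLab Unit} {e : H.E}
    (hl : ∀ i c, l i = some c → H.l (![H.s e, H.t e] i) = some c)
    (hp : ∀ i b, p i = some b → H.p (![H.s e, H.t e] i) = some b) (hne : H.s e ≠ H.t e) :
    (edgeMatch e hl hp).Injective := by
  refine ⟨fun i j hij => ?_, fun _ _ _ => rfl⟩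
  fin_cases i <;> fin_cases j <;> simp_all [edgeMatch, Ne.symm hne]

namespace TreeInvariant

variable {H : RGraph NodeLab Unit}

theorem exists_applicable_r2 (hH : TreeInvariant H) {e : H.E}
    (hroot : H.p (H.s e) = some true) : ∃ g : Morphism r2.L H, r2.Applicable H g := by
  have hne := ne_of_not_hasUndirCycle hH.acyclic e
  have hlt : H.l (H.t e) = some .square :=
    hH.l_eq_square_of_ne_tri (hH.l_t_ne_tri_of_root hroot)
  have hpt : H.p (H.t e) = some false := hH.p_eq_false_of_ne_root hroot hne.symm
  have hl : ∀ i c, (fun _ => some .square) i = some c → H.l (![H.s e, H.t e] i) = some c := by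
    simp [Fin.forall_fin_two, hH.root_square hroot, hlt]
  have hp : ∀ i b, ![some true, some false] i = some b → H.p (![H.s e, H.t e] i) = some b := by
    simp [Fin.forall_fin_two, hroot, hpt]
  exact ⟨edgeMatch e hl hp, edgeMatch_injective hl hp hne, fun _ _ v hv => (hv v rfl).elim⟩

theorem exists_applicable_r0_r1 (hH : TreeInvariant H) {e : H.E}
    (hroot : H.p (H.t e) = some true) (hout : ∀ e', H.s e' ≠ H.t e) :
    ∃ r ∈ TreeRules, ∃ g : Morphism r.L H, r.Applicable H g := by
  have hne := hout e
  have hps := hH.p_eq_false_of_ne_root hroot hne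
  have hp : ∀ i b, ![some false, some true] i = some b → H.p (![H.s e, H.t e] i) = some b := by
    simp [Fin.forall_fin_two, hps, hroot]
  have hdangling : ∀ e'', (∀ _ : Unit, e ≠ e'') →
      ∀ v : Fin 2, (∀ _ : Unit, (0 : Fin 2) ≠ v) →
        H.s e'' ≠ ![H.s e, H.t e] v ∧ H.t e'' ≠ ![H.s e, H.t e] v := fun e'' he'' v hv => by
    rw [Fin.eq_one_of_ne_zero v fun h => hv () h.symm]
    exact ⟨hout e'', fun h => he'' () (hH.eq_of_t_eq h).symm⟩
  obtain ⟨_ | _, hc⟩ := Option.isSome_iff_exists.mp (hH.labelled (H.s e))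
  · have hl : ∀ i c, (fun _ => some .square) i = some c →
        H.l (![H.s e, H.t e] i) = some c := by
      simp [Fin.forall_fin_two, hc, hH.root_square hroot]
    exact ⟨r0, by simp [TreeRules], edgeMatch e hl hp, edgeMatch_injective hl hp hne, hdangling⟩
  · have hl : ∀ i c, ![some .tri, some .square] i = some c →
        H.l (![H.s e, H.t e] i) = some c := by
      simp [Fin.forall_fin_two, hc, hH.root_square hroot]
    exact ⟨r1, by simp [TreeRules], edgeMatch e hl hp, edgeMatch_injective hl hp hne, hdangling⟩

theorem progress (hH : TreeInvariant H) :
    Nat.card H.V = 1 ∨ ∃ r ∈ TreeRules, ∃ g : Morphism r.L H, r.Applicable H g := by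
  obtain ⟨v, hv⟩ := hH.exists_root
  by_cases hout : ∃ e, H.s e = v
  · obtain ⟨e, rfl⟩ := hout
    exact .inr ⟨r2, by simp [TreeRules], hH.exists_applicable_r2 hv⟩
  by_cases hsingle : ∀ u, u = v
  · exact .inl (Nat.card_eq_one_iff_exists.mpr ⟨v, hsingle⟩)
  push Not at hout hsingle
  obtain ⟨u, hu⟩ := hsingle
  obtain ⟨l, hl⟩ := hH.connected u v
  obtain ⟨e, he | rfl⟩ := hl.exists_incident hu
  · exact absurd he (hout e)
  · exact .inr (hH.exists_applicable_r0_r1 hv hout)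

end TreeInvariant

/-- **Tree Progress**: if `G` is an input tree and `G ⇒*_𝓡 H`, then either `H`
has a single node, or `H` is not in normal form (some rule of `𝓡` is
applicable to `H` via a match satisfying the dangling condition). -/
theorem tree_progress (G H : RGraph NodeLab Unit)
    (hG : IsInputGraph G) (hGtree : IsTree G)
    (hd : GTDerivStar TreeRules G H) :
    Nat.card H.V = 1 ∨
      ∃ r ∈ TreeRules, ∃ g : Morphism r.L H, r.Applicable H g := by
  have hG' := TreeInvariant.of_input hG hGtree
  have hH : TreeInvariant H := by
    rcases hd with hsteps | ⟨⟨i⟩⟩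
    · induction hsteps with
      | refl => exact hG'
      | tail _ hstep ih => exact ih.step hstep
    · exact hG'.of_iso i
  exact hH.progress
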